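/- Let Φ and Φ' be two states with the same partition into tuples and with equal values at every position except at position a, where Φ[a] > Φ'[a] ≥ 0, and at position b, where Φ[b] < Φ'[b] ≤ 0. If M is a move of type 1, 2 or 3 that is valid for Φ and satisfies M(Φ)[a] = Φ[a], then M is valid for Φ'. -/

import Mathlib

namespace CPaper


/-- The six types of moves on states (all indices 0-based). -/
inductive Move where
  | t1 (d : ℕ)
  | t2 (i : ℕ)
  | t3 (i j : ℕ)
  | t4 (i j : ℕ)
  | t5 (i j : ℕ)
  | t6 (i j : ℕ)

/-- A state is a list of tuples of integers. -/
abbrev State := List (List ℤ)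

/-- A genuine state: at least one tuple, and all tuples nonempty. -/
def IsState (Φ : State) : Prop := Φ ≠ [] ∧ ∀ t ∈ Φ, t ≠ []

/-- The entries of a state, read in order (flattened). -/
def entries (Φ : State) : List ℤ := Φ.flatten

/-- The number of positions of a state. -/
def numPos (Φ : State) : ℕ := (entries Φ).length

/-- The value at the (0-based) position `i` of the state `Φ`. -/
def entry (Φ : State) (i : ℕ) : ℤ := (entries Φ).getD i 0

/-- The (0-based) index of the tuple containing the flat position `i`. -/
def tupleIdx : State → ℕ → ℕ
  | [], _ => 0
  | t :: ts, i => if i < t.length then 0 else tupleIdx ts (i - t.length) + 1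

/-- Positions `i` and `j` lie in the same tuple of `Φ`. -/
def SameTuple (Φ : State) (i j : ℕ) : Prop := tupleIdx Φ i = tupleIdx Φ j

/-- Position `i` is dominant in `Φ`: its value bounds the absolute value of
every entry of the tuple containing it. -/
def DominantAt (Φ : State) (i : ℕ) : Prop :=
  ∀ k, k < numPos Φ → SameTuple Φ i k → |entry Φ k| ≤ entry Φ i

/-- Apply `f` at flat position `i`, preserving the tuple structure. -/
def modifyFlat (f : ℤ → ℤ) : ℕ → State → State
  | _, [] => []
  | i, t :: ts =>
    if i < t.length then (t.take i ++ f (t.getD i 0) :: t.drop (i + 1)) :: ts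
    else t :: modifyFlat f (i - t.length) ts

/-- Concatenate the `d`-th and `(d+1)`-th tuples of `Φ` (0-based). -/
def joinAt (Φ : State) (d : ℕ) : State :=
  Φ.take d ++ (Φ.getD d [] ++ Φ.getD (d + 1) []) :: Φ.drop (d + 2)

/-- The action of a move on a state. -/
def Move.apply : Move → State → State
  | .t1 d, Φ => joinAt Φ d
  | .t2 i, Φ => modifyFlat (· + 1) i Φ
  | .t3 i j, Φ => modifyFlat (· - 1) j (modifyFlat (· + 1) i Φ)
  | .t4 i j, Φ => modifyFlat (· - 1) j (modifyFlat (· + 1) i Φ)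
  | .t5 i j, Φ => modifyFlat (· + 1) j (modifyFlat (· + 1) i Φ)
  | .t6 i j, Φ => modifyFlat (· + 1) j (modifyFlat (· + 1) i Φ)

/-- A move is admissible for `Φ` when its indices are within bounds. -/
def Move.Admissible : Move → State → Prop
  | .t1 d, Φ => d + 1 < Φ.length
  | .t2 i, Φ => i < numPos Φ
  | .t3 i j, Φ => i < numPos Φ ∧ j < numPos Φ ∧ i ≠ j
  | .t4 i j, Φ => i < numPos Φ ∧ j < numPos Φ ∧ i ≠ j
  | .t5 i j, Φ => i < numPos Φ ∧ j < numPos Φ ∧ i ≠ j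
  | .t6 i j, Φ => i < numPos Φ ∧ j < numPos Φ ∧ i ≠ j

/-- Validity of a move for a state. -/
def Move.Valid : Move → State → Prop
  | .t1 d, Φ => d + 1 < Φ.length
  | .t2 i, Φ => i < numPos Φ ∧ DominantAt Φ i
  | .t3 i j, Φ =>
      i < numPos Φ ∧ j < numPos Φ ∧ i ≠ j ∧ SameTuple Φ i j ∧ DominantAt Φ i ∧ entry Φ j ≤ 0
  | .t4 i j, Φ =>
      i < numPos Φ ∧ j < numPos Φ ∧ i ≠ j ∧ SameTuple Φ i j ∧ DominantAt Φ i ∧ 0 < entry Φ j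
  | .t5 i j, Φ =>
      i < numPos Φ ∧ j < numPos Φ ∧ i ≠ j ∧ SameTuple Φ i j ∧ DominantAt Φ i ∧ entry Φ j < 0
  | .t6 i j, Φ =>
      i < numPos Φ ∧ j < numPos Φ ∧ i ≠ j ∧ SameTuple Φ i j ∧ DominantAt Φ i ∧ 0 ≤ entry Φ j

def Move.isType1 : Move → Prop
  | .t1 _ => True
  | _ => False

def Move.isType2 : Move → Prop
  | .t2 _ => True
  | _ => False

def Move.isType3 : Move → Prop
  | .t3 _ _ => True
  | _ => False

/-- The move is of one of the types 1, 2 or 3. -/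
def Move.isType123 : Move → Prop
  | .t1 _ => True
  | .t2 _ => True
  | .t3 _ _ => True
  | _ => False

/-- `ValidSeq ms Φ Ψ`: the list of moves `ms`, applied in order starting from `Φ`,
consists of valid moves and ends at `Ψ`. -/
def ValidSeq : List Move → State → State → Prop
  | [], Φ, Ψ => Φ = Ψ
  | m :: ms, Φ, Ψ => m.Valid Φ ∧ ValidSeq ms (m.apply Φ) Ψ

/-- A tuple of integers is C*_{Z,6}-realizable: the one-tuple state `[l]` is reachable
from `((0),...,(0))` by a finite sequence of valid moves of types 1–6. -/
def CStarZ6 (l : List ℤ) : Prop :=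
  ∃ ms : List Move, ValidSeq ms (List.replicate l.length ([0] : List ℤ)) [l]

/-- A tuple of integers is C*_{Z,3}-realizable: the one-tuple state `[l]` is reachable
from `((0),...,(0))` by a finite sequence of valid moves of types 1, 2 and 3. -/
def CStarZ3 (l : List ℤ) : Prop :=
  ∃ ms : List Move, (∀ m ∈ ms, m.isType123) ∧
    ValidSeq ms (List.replicate l.length ([0] : List ℤ)) [l]

/-!
Passing from `Φ` to `Φ'` only shrinks absolute values (`Φ[a]` moves towards `0` from above,
`Φ[b]` from below) and keeps the tuple structure, so dominance of a position survives as long as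
its own value is unchanged. A valid move of type 2 or 3 acts at a dominant position `i`, which is
not `b` because `Φ[b] < 0`, and not `a` because the move keeps `Φ[a]`; the second position `j` of
a type 3 move is not `a` either, and `Φ'[j] ≤ 0` holds also for `j = b`.
-/

theorem _root_.List.modify_append_of_lt_length {α : Type*} (f : α → α) {l : List α}
    (l' : List α) {i : ℕ} (h : i < l.length) : (l ++ l').modify i f = l.modify i f ++ l' := by
  ext1 k
  simp only [List.getElem?_modify, List.getElem?_append]
  split_ifs <;> simp_all
  omega

theorem _root_.List.modify_append_of_length_le {α : Type*} (f : α → α) (l : List α)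
    {l' : List α} {i : ℕ} (h : l.length ≤ i) :
    (l ++ l').modify i f = l ++ l'.modify (i - l.length) f := by
  ext1 k
  simp only [List.getElem?_modify, List.getElem?_append]
  split_ifs <;> simp_all <;> omega

theorem entries_modifyFlat (f : ℤ → ℤ) :
    ∀ (i : ℕ) (Φ : State), entries (modifyFlat f i Φ) = (entries Φ).modify i f
  | _, [] => by simp [modifyFlat, entries]
  | i, t :: ts => by
    unfold modifyFlat
    split_ifs with h
    · simp [entries, List.modify_append_of_lt_length _ _ h, List.modify_eq_take_cons_drop h,
        List.getElem?_eq_getElem h]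
    · have ih := entries_modifyFlat f (i - t.length) ts
      simp only [entries] at ih
      simp [entries, List.modify_append_of_length_le _ _ (not_lt.1 h), ih]

theorem numPos_modifyFlat (f : ℤ → ℤ) (i : ℕ) (Φ : State) :
    numPos (modifyFlat f i Φ) = numPos Φ := by
  simp [numPos, entries_modifyFlat]

theorem entry_modifyFlat_self (f : ℤ → ℤ) {i : ℕ} {Φ : State} (h : i < numPos Φ) :
    entry (modifyFlat f i Φ) i = f (entry Φ i) := by
  simp [entry, entries_modifyFlat, List.getD_eq_getElem?_getD, List.getElem?_modify_eq,
    List.getElem?_eq_getElem h]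

theorem entry_modifyFlat_of_ne (f : ℤ → ℤ) {i k : ℕ} (Φ : State) (h : i ≠ k) :
    entry (modifyFlat f i Φ) k = entry Φ k := by
  simp [entry, entries_modifyFlat, List.getD_eq_getElem?_getD, List.getElem?_modify_ne _ _ h]

theorem entry_apply_t2_self {i : ℕ} {Φ : State} (hi : i < numPos Φ) :
    entry ((Move.t2 i).apply Φ) i = entry Φ i + 1 :=
  entry_modifyFlat_self _ hi

theorem entry_apply_t3_left {i j : ℕ} {Φ : State} (hi : i < numPos Φ) (hij : i ≠ j) :
    entry ((Move.t3 i j).apply Φ) i = entry Φ i + 1 := by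
  rw [Move.apply, entry_modifyFlat_of_ne _ _ hij.symm, entry_modifyFlat_self _ hi]

theorem entry_apply_t3_right {i j : ℕ} {Φ : State} (hj : j < numPos Φ) (hij : i ≠ j) :
    entry ((Move.t3 i j).apply Φ) j = entry Φ j - 1 := by
  rw [Move.apply, entry_modifyFlat_self _ (by rwa [numPos_modifyFlat]),
    entry_modifyFlat_of_ne _ _ hij]

section SameShape

variable {Φ Φ' : State}

theorem tupleIdx_eq_of_map_length_eq (h : Φ.map List.length = Φ'.map List.length) (i : ℕ) :
    tupleIdx Φ i = tupleIdx Φ' i := by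
  induction Φ generalizing Φ' i with
  | nil => cases Φ' <;> simp_all [tupleIdx]
  | cons t ts ih =>
    cases Φ' with
    | nil => simp at h
    | cons t' ts' =>
      simp only [List.map_cons, List.cons.injEq] at h
      simp only [tupleIdx, h.1, ih h.2]

theorem numPos_eq_of_map_length_eq (h : Φ.map List.length = Φ'.map List.length) :
    numPos Φ = numPos Φ' := by
  simp only [numPos, entries, List.length_flatten, h]

theorem sameTuple_iff_of_map_length_eq (h : Φ.map List.length = Φ'.map List.length)
    (i j : ℕ) : SameTuple Φ i j ↔ SameTuple Φ' i j := by
  simp only [SameTuple, tupleIdx_eq_of_map_length_eq h]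

theorem DominantAt.entry_nonneg {i : ℕ} (hd : DominantAt Φ i) (hi : i < numPos Φ) :
    0 ≤ entry Φ i :=
  (abs_nonneg _).trans (hd i hi rfl)

theorem DominantAt.of_abs_entry_le {i : ℕ} (hd : DominantAt Φ i)
    (hshape : Φ.map List.length = Φ'.map List.length)
    (habs : ∀ k < numPos Φ, |entry Φ' k| ≤ |entry Φ k|) (hi : entry Φ' i = entry Φ i) :
    DominantAt Φ' i := by
  intro k hk hik
  rw [← numPos_eq_of_map_length_eq hshape] at hk
  rw [hi]
  exact (habs k hk).trans (hd k hk ((sameTuple_iff_of_map_length_eq hshape i k).2 hik))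

end SameShape

theorem valid_of_decrease_positive_increase_negative_general
    (Φ Φ' : State)
    (hshape : Φ.map List.length = Φ'.map List.length)
    (a b : ℕ)
    (heq : ∀ k, k < numPos Φ → k ≠ a → k ≠ b → entry Φ k = entry Φ' k)
    (haval : entry Φ' a < entry Φ a) (haval' : 0 ≤ entry Φ' a)
    (hbval : entry Φ b < entry Φ' b) (hbval' : entry Φ' b ≤ 0)
    (M : Move) (hM : M.isType123) (hMval : M.Valid Φ)
    (hMa : entry (M.apply Φ) a = entry Φ a) :
    M.Valid Φ' := by
  have hnum := numPos_eq_of_map_length_eq hshape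
  have habs : ∀ k < numPos Φ, |entry Φ' k| ≤ |entry Φ k| := by
    intro k hk
    by_cases hka : k = a
    · subst hka; rw [abs_of_nonneg haval', abs_of_nonneg (by omega)]; omega
    by_cases hkb : k = b
    · subst hkb; rw [abs_of_nonpos hbval', abs_of_nonpos (by omega)]; omega
    rw [heq k hk hka hkb]
  have hdom : ∀ i < numPos Φ, i ≠ a → DominantAt Φ i → DominantAt Φ' i := by
    intro i hi hia hd
    have hib : i ≠ b := by rintro rfl; have := hd.entry_nonneg hi; omega
    exact hd.of_abs_entry_le hshape habs (heq i hi hia hib).symm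
  cases M with
  | t1 d =>
    have hlen : Φ.length = Φ'.length := by simpa using congrArg List.length hshape
    exact (show d + 1 < Φ.length from hMval).trans_eq hlen
  | t2 i =>
    obtain ⟨hi, hd⟩ := hMval
    have hia : i ≠ a := by rintro rfl; rw [entry_apply_t2_self hi] at hMa; omega
    exact ⟨hnum ▸ hi, hdom i hi hia hd⟩
  | t3 i j =>
    obtain ⟨hi, hj, hij, hst, hd, hj0⟩ := hMval
    have hia : i ≠ a := by rintro rfl; rw [entry_apply_t3_left hi hij] at hMa; omega
    have hja : j ≠ a := by rintro rfl; rw [entry_apply_t3_right hj hij] at hMa; omega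
    have hj0' : entry Φ' j ≤ 0 := by
      by_cases hjb : j = b
      · exact hjb ▸ hbval'
      · rwa [← heq j hj hja hjb]
    exact ⟨hnum ▸ hi, hnum ▸ hj, hij, (sameTuple_iff_of_map_length_eq hshape i j).1 hst,
      hdom i hi hia hd, hj0'⟩
  | _ => exact hM.elim

/-- Technical lemma: let `Φ` and `Φ'` coincide (with the same partition into tuples)
except at position `a`, where `Φ[a] > Φ'[a] ≥ 0`, and at position `b`, where
`Φ[b] < Φ'[b] ≤ 0`. If `M` is a valid move of type 1, 2 or 3 for `Φ` with
`M(Φ)[a] = Φ[a]`, then `M` is valid for `Φ'`. -/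
theorem valid_of_decrease_positive_increase_negative
    (Φ Φ' : State) (hΦ : IsState Φ) (hΦ' : IsState Φ')
    (hshape : Φ.map List.length = Φ'.map List.length)
    (a b : ℕ) (ha : a < numPos Φ) (hb : b < numPos Φ) (hab : a ≠ b)
    (heq : ∀ k, k < numPos Φ → k ≠ a → k ≠ b → entry Φ k = entry Φ' k)
    (haval : entry Φ' a < entry Φ a) (haval' : 0 ≤ entry Φ' a)
    (hbval : entry Φ b < entry Φ' b) (hbval' : entry Φ' b ≤ 0)
    (M : Move) (hM : M.isType123) (hMval : M.Valid Φ)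
    (hMa : entry (M.apply Φ) a = entry Φ a) :
    M.Valid Φ' :=
  valid_of_decrease_positive_increase_negative_general Φ Φ' hshape a b heq haval haval' hbval hbval'
    M hM hMval hMa

end CPaper
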